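/- Let T be an infinite rooted tree without terminal vertices and let ψ : T → ℂ, φ : T → T be such that ψC_φ : 𝓛 → L^∞ is bounded. Then the essential norm satisfies ‖ψC_φ‖_{e, 𝓛→L^∞} = limsup_{|φ(v)|→∞} |ψ(v)|·|φ(v)|, where the limsup is the infimum over N of sup{|ψ(v)||φ(v)| : |φ(v)| > N} (interpreted as 0 if φ has finite range). -/

import Mathlib

open scoped Classical

/-- An infinite rooted tree without terminal vertices, encoded by its root `o`,
the parent map, and the distance-to-root function `len`. Local finiteness and
absence of terminal vertices are part of the structure. -/
structure InfRootedTree (T : Type*) where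
  o : T
  parent : T → T
  len : T → ℕ
  len_o : len o = 0
  parent_o : parent o = o
  len_parent : ∀ v, v ≠ o → len (parent v) + 1 = len v
  reach : ∀ v, parent^[len v] v = o
  no_terminal : ∀ v, ∃ w, w ≠ o ∧ parent w = v
  locally_finite : ∀ v, {w | parent w = v}.Finite

/-- The discrete derivative `Df(v) = f(v) - f(v⁻)`, `Df(o) = 0`. -/
noncomputable def Dop {T : Type*} (t : InfRootedTree T) (f : T → ℂ) (v : T) : ℂ :=
  if v = t.o then 0 else f v - f (t.parent v)

/-- Membership in the Lipschitz space `𝓛`. -/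
def InLip {T : Type*} (t : InfRootedTree T) (f : T → ℂ) : Prop :=
  BddAbove (Set.range fun v => ‖Dop t f v‖)

/-- The Lipschitz norm `‖f‖_𝓛 = |f(o)| + sup_v |Df(v)|`. -/
noncomputable def lipNorm {T : Type*} (t : InfRootedTree T) (f : T → ℂ) : ℝ :=
  ‖f t.o‖ + ⨆ v, ‖Dop t f v‖

open scoped BoundedContinuousFunction

lemma Dop_add {T : Type*} (t : InfRootedTree T) (f g : T → ℂ) (v : T) :
    Dop t (f + g) v = Dop t f v + Dop t g v := by
  unfold Dop; split <;> simp <;> ring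

lemma Dop_smul {T : Type*} (t : InfRootedTree T) (c : ℂ) (f : T → ℂ) (v : T) :
    Dop t (c • f) v = c • Dop t f v := by
  unfold Dop; split <;> simp <;> ring

/-- The Lipschitz space `𝓛` as a subspace of the space of all functions on `T`. -/
noncomputable def LipSub {T : Type*} (t : InfRootedTree T) : Submodule ℂ (T → ℂ) where
  carrier := {f | BddAbove (Set.range fun v => ‖Dop t f v‖)}
  zero_mem' := by
    refine ⟨0, ?_⟩
    rintro x ⟨v, rfl⟩
    simp [Dop]
  add_mem' := by
    rintro f g ⟨Cf, hCf⟩ ⟨Cg, hCg⟩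
    refine ⟨Cf + Cg, ?_⟩
    rintro x ⟨v, rfl⟩
    calc ‖Dop t (f + g) v‖ = ‖Dop t f v + Dop t g v‖ := by rw [Dop_add]
      _ ≤ ‖Dop t f v‖ + ‖Dop t g v‖ := norm_add_le _ _
      _ ≤ Cf + Cg := add_le_add (hCf ⟨v, rfl⟩) (hCg ⟨v, rfl⟩)
  smul_mem' := by
    rintro c f ⟨C, hC⟩
    refine ⟨‖c‖ * C, ?_⟩
    rintro x ⟨v, rfl⟩
    calc ‖Dop t (c • f) v‖ = ‖c‖ * ‖Dop t f v‖ := by rw [Dop_smul]; simp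
      _ ≤ ‖c‖ * C := by
          have := hC ⟨v, rfl⟩
          exact mul_le_mul_of_nonneg_left this (norm_nonneg c)

/-!
Upper bound: `K_N f = 1_{|φ v| ≤ N} · ψ C_φ f` only sees `f` on the finite ball `{|w| ≤ N}`,
so it has finite rank; it is bounded because `ψ C_φ` is, hence compact. Since
`|f w| ≤ |w| ‖f‖_𝓛` for `w ≠ o`, the remainder `ψ C_φ - K_N` has norm at most
`sup_{|φ v| > N} |ψ v| |φ v|`.

Lower bound: testing on `min (|·|, |φ v|)` gives `|ψ v| |φ v| ≤ C`. Pick `v_n` with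
`|φ v_n| > n` and `|ψ v_n| |φ v_n|` close to the limsup. The radial functions
`r_n = min (|·|, |φ v_n|)` and their differences lie in the unit ball of `𝓛`. For compact `K`,
some `K r_j` is close to `K r_l` for infinitely many `l`, while
`|(ψ C_φ (r_l - r_j)) (v_l)| ≥ |ψ v_l| (|φ v_l| - |φ v_j|)` and `|ψ v_l| |φ v_j| → 0`.
-/

open Filter Topology BoundedContinuousFunction

lemma IsCompact.exists_frequently_dist_lt {X : Type*} [PseudoMetricSpace X] {s : Set X}
    (hs : IsCompact s) {x : ℕ → X} (hx : ∀ n, x n ∈ s) {ε : ℝ} (hε : 0 < ε) :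
    ∃ j, ∃ᶠ l in atTop, dist (x l) (x j) < ε := by
  obtain ⟨_, -, σ, hσ, hlim⟩ := hs.tendsto_subseq hx
  obtain ⟨N, hN⟩ := Metric.cauchySeq_iff'.1 hlim.cauchySeq ε hε
  exact ⟨σ N, hσ.tendsto_atTop.frequently (eventually_atTop.2 ⟨N, hN⟩).frequently⟩

lemma Submodule.isCompact_closure_of_subset {𝕜 E : Type*} [NontriviallyNormedField 𝕜]
    [ProperSpace 𝕜] [NormedAddCommGroup E] [NormedSpace 𝕜 E] (V : Submodule 𝕜 E)
    [FiniteDimensional 𝕜 V] {S : Set E} (hSV : S ⊆ V) (hS : Bornology.IsBounded S) :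
    IsCompact (closure S) := by
  have := FiniteDimensional.proper 𝕜 V
  have hS' : Bornology.IsBounded (((↑) : V → E) ⁻¹' S) := by
    obtain ⟨R, hR⟩ := isBounded_iff_forall_norm_le.1 hS
    exact isBounded_iff_forall_norm_le.2 ⟨R, fun x hx => hR _ hx⟩
  have hK := hS'.isCompact_closure.image continuous_subtype_val
  refine hK.of_isClosed_subset isClosed_closure (closure_minimal ?_ hK.isClosed)
  exact fun x hx => ⟨⟨x, hSV hx⟩, subset_closure hx, rfl⟩

namespace InfRootedTree

variable {T : Type*} (t : InfRootedTree T)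

lemma eq_o_of_len_eq_zero {v : T} (h : t.len v = 0) : v = t.o := by
  simpa [h] using t.reach v

lemma finite_setOf_len_le (n : ℕ) : {w : T | t.len w ≤ n}.Finite := by
  induction n with
  | zero =>
    exact (Set.finite_singleton t.o).subset fun w hw => t.eq_o_of_len_eq_zero (Nat.le_zero.mp hw)
  | succ n ih =>
    refine ((ih.biUnion fun v _ => t.locally_finite v).insert t.o).subset fun w hw => ?_
    by_cases hw' : w = t.o
    · exact Or.inl hw'
    · have := t.len_parent w hw'
      refine Or.inr (Set.mem_biUnion (x := t.parent w) ?_ rfl)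
      simp only [Set.mem_ofPred_eq] at hw ⊢
      omega

end InfRootedTree

section Lipschitz

variable {T : Type*} (t : InfRootedTree T)

lemma Dop_sub (f g : T → ℂ) (v : T) : Dop t (f - g) v = Dop t f v - Dop t g v := by
  unfold Dop
  split
  · simp
  · simp only [Pi.sub_apply]; ring

lemma norm_le_of_forall_norm_Dop_le {f : T → ℂ} {d : ℝ} (hd : ∀ v, ‖Dop t f v‖ ≤ d) (v : T) :
    ‖f v‖ ≤ ‖f t.o‖ + t.len v * d := by
  induction hn : t.len v generalizing v with
  | zero => simp [t.eq_o_of_len_eq_zero hn]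
  | succ n ih =>
    have hv : v ≠ t.o := by rintro rfl; simp [t.len_o] at hn
    have hp : t.len (t.parent v) = n := by have := t.len_parent v hv; omega
    have hD : f v = f (t.parent v) + Dop t f v := by simp [Dop, hv]
    calc ‖f v‖ ≤ ‖f (t.parent v)‖ + ‖Dop t f v‖ := hD ▸ norm_add_le _ _
      _ ≤ ‖f t.o‖ + n * d + d := add_le_add (ih _ hp) (hd v)
      _ = ‖f t.o‖ + ↑(n + 1) * d := by push_cast; ring

lemma lipNorm_nonneg (f : T → ℂ) : 0 ≤ lipNorm t f :=
  add_nonneg (norm_nonneg _) (Real.iSup_nonneg fun _ => norm_nonneg _)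

lemma lipNorm_le_one_of_norm_Dop_le_one {f : T → ℂ} (ho : f t.o = 0)
    (hd : ∀ v, ‖Dop t f v‖ ≤ 1) : lipNorm t f ≤ 1 := by
  simpa [lipNorm, ho] using Real.iSup_le hd zero_le_one

lemma norm_le_len_mul_lipNorm (f : LipSub t) {v : T} (hv : 1 ≤ t.len v) :
    ‖(f : T → ℂ) v‖ ≤ t.len v * lipNorm t f := by
  have hL : (1 : ℝ) ≤ t.len v := by exact_mod_cast hv
  have hd : 0 ≤ ⨆ u, ‖Dop t f u‖ := Real.iSup_nonneg fun _ => norm_nonneg _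
  have h := norm_le_of_forall_norm_Dop_le t (fun u => le_ciSup f.2 u) v
  rw [lipNorm]
  nlinarith [norm_nonneg ((f : T → ℂ) t.o)]

noncomputable def radial (n : ℕ) (v : T) : ℂ := (min (t.len v) n : ℕ)

lemma radial_zero : radial t 0 = 0 := by
  funext v
  simp [radial]

lemma radial_of_len_le {n : ℕ} {w : T} (h : t.len w ≤ n) : radial t n w = t.len w := by
  simp [radial, h]

lemma norm_radial_le (n : ℕ) (w : T) : ‖radial t n w‖ ≤ n := by
  simp [radial]

lemma Dop_radial (n : ℕ) (v : T) :
    Dop t (radial t n) v = if v ≠ t.o ∧ t.len v ≤ n then 1 else 0 := by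
  by_cases hv : v = t.o
  · simp [Dop, hv]
  · have hp := t.len_parent v hv
    simp only [Dop, radial, hv, if_false, ne_eq, not_false_eq_true, true_and, ← hp]
    split_ifs with h
    · rw [min_eq_left h, min_eq_left (by omega)]
      push_cast
      ring
    · rw [min_eq_right (by omega), min_eq_right (by omega), sub_self]

lemma norm_Dop_radial_sub_le (m n : ℕ) (v : T) : ‖Dop t (radial t m - radial t n) v‖ ≤ 1 := by
  rw [Dop_sub, Dop_radial, Dop_radial]
  split_ifs <;> simp

lemma lipNorm_radial_sub_le (m n : ℕ) : lipNorm t (radial t m - radial t n) ≤ 1 :=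
  lipNorm_le_one_of_norm_Dop_le_one t (by simp [radial, t.len_o]) (norm_Dop_radial_sub_le t m n)

lemma lipNorm_radial_le (n : ℕ) : lipNorm t (radial t n) ≤ 1 := by
  simpa [radial_zero] using lipNorm_radial_sub_le t n 0

lemma one_mem_LipSub : (1 : T → ℂ) ∈ LipSub t :=
  ⟨0, by rintro _ ⟨v, rfl⟩; simp [Dop]⟩

noncomputable def radialLip (n : ℕ) : LipSub t :=
  ⟨radial t n, 1, by
    rintro _ ⟨v, rfl⟩
    simpa [radial_zero] using norm_Dop_radial_sub_le t n 0 v⟩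

end Lipschitz

section Tail

variable {T : Type*} (t : InfRootedTree T)

noncomputable def tailSup (ψ : T → ℂ) (φ : T → T) (N : ℕ) : ℝ :=
  ⨆ v : {v : T // N < t.len (φ v)}, ‖ψ v.1‖ * t.len (φ v.1)

lemma tailSup_nonneg (ψ : T → ℂ) (φ : T → T) (N : ℕ) : 0 ≤ tailSup t ψ φ N :=
  Real.iSup_nonneg fun _ => by positivity

variable {ψ : T → ℂ} {φ : T → T} {C : ℝ}

lemma mul_len_le_tailSup (hψ : ∀ v, ‖ψ v‖ * t.len (φ v) ≤ C) {N : ℕ} {v : T}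
    (hv : N < t.len (φ v)) : ‖ψ v‖ * t.len (φ v) ≤ tailSup t ψ φ N :=
  le_ciSup (f := fun v : {v : T // N < t.len (φ v)} => ‖ψ v.1‖ * t.len (φ v.1))
    ⟨C, by rintro _ ⟨v, rfl⟩; exact hψ v⟩ ⟨v, hv⟩

lemma exists_lt_mul_len_of_lt_tailSup {N : ℕ} {a : ℝ} (ha : 0 ≤ a) (h : a < tailSup t ψ φ N) :
    ∃ v, N < t.len (φ v) ∧ a < ‖ψ v‖ * t.len (φ v) := by
  by_contra! hle
  exact (Real.iSup_le (fun v : {v : T // N < t.len (φ v)} => hle v.1 v.2) ha).not_gt h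

lemma tendsto_norm_of_lt_len (hψ : ∀ v, ‖ψ v‖ * t.len (φ v) ≤ C) {v : ℕ → T}
    (hv : ∀ n, n < t.len (φ (v n))) : Tendsto (fun n => ‖ψ (v n)‖) atTop (𝓝 0) := by
  have hC : Tendsto (fun n : ℕ => C * (1 / ((n : ℝ) + 1))) atTop (𝓝 0) := by
    simpa using tendsto_one_div_add_atTop_nhds_zero_nat.const_mul C
  refine squeeze_zero (fun _ => norm_nonneg _) (fun n => ?_) hC
  have hn : (n : ℝ) + 1 ≤ t.len (φ (v n)) := by exact_mod_cast hv n
  rw [mul_one_div, le_div_iff₀ (by positivity)]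
  exact (mul_le_mul_of_nonneg_left hn (norm_nonneg _)).trans (hψ (v n))

end Tail

section OpNorm

variable {T : Type*} [TopologicalSpace T] (t : InfRootedTree T)

noncomputable def lipOpNorm (B : LipSub t →ₗ[ℂ] (T →ᵇ ℂ)) : ℝ :=
  sSup {y : ℝ | ∃ f : LipSub t, lipNorm t (f : T → ℂ) ≤ 1 ∧ y = ‖B f‖}

def IsCompactLipOp (K : LipSub t →ₗ[ℂ] (T →ᵇ ℂ)) : Prop :=
  IsCompact (closure (⇑K '' {f : LipSub t | lipNorm t (f : T → ℂ) ≤ 1}))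

lemma lipOpNorm_nonneg (B : LipSub t →ₗ[ℂ] (T →ᵇ ℂ)) : 0 ≤ lipOpNorm t B :=
  Real.sSup_nonneg fun _ ⟨_, _, hy⟩ => hy ▸ norm_nonneg _

lemma lipOpNorm_le {B : LipSub t →ₗ[ℂ] (T →ᵇ ℂ)} {M : ℝ} (hM : 0 ≤ M)
    (hB : ∀ f : LipSub t, lipNorm t f ≤ 1 → ‖B f‖ ≤ M) : lipOpNorm t B ≤ M :=
  Real.sSup_le (fun _ ⟨f, hf, hy⟩ => hy ▸ hB f hf) hM

lemma norm_le_lipOpNorm {B : LipSub t →ₗ[ℂ] (T →ᵇ ℂ)} {M : ℝ}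
    (hB : ∀ f : LipSub t, lipNorm t f ≤ 1 → ‖B f‖ ≤ M) {f : LipSub t} (hf : lipNorm t f ≤ 1) :
    ‖B f‖ ≤ lipOpNorm t B :=
  le_csSup ⟨M, fun _ ⟨g, hg, hy⟩ => hy ▸ hB g hg⟩ ⟨f, hf, rfl⟩

variable {ψ : T → ℂ} {φ : T → T} {C : ℝ} (A : LipSub t →ₗ[ℂ] (T →ᵇ ℂ))
  (hA : ∀ f : LipSub t, ∀ v : T, A f v = ψ v * (f : T → ℂ) (φ v))
include hA

lemma norm_mul_len_le (hAC : ∀ f : LipSub t, lipNorm t f ≤ 1 → ‖A f‖ ≤ C) (v : T) :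
    ‖ψ v‖ * t.len (φ v) ≤ C := by
  have h := (norm_coe_le_norm (A (radialLip t (t.len (φ v)))) v).trans
    (hAC _ (lipNorm_radial_le t _))
  rwa [hA, show ((radialLip t _ : LipSub t) : T → ℂ) = radial t _ from rfl,
    radial_of_len_le t le_rfl, norm_mul, Complex.norm_natCast] at h

lemma exists_lipNorm_le_one_and_le_norm_sub (hψ : ∀ v, ‖ψ v‖ * t.len (φ v) ≤ C)
    {K : LipSub t →ₗ[ℂ] (T →ᵇ ℂ)} (hK : IsCompactLipOp t K) {v : ℕ → T}
    (hv : ∀ n, n < t.len (φ (v n))) {a : ℝ} (ha : ∀ n, a < ‖ψ (v n)‖ * t.len (φ (v n)))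
    {δ : ℝ} (hδ : 0 < δ) : ∃ f : LipSub t, lipNorm t f ≤ 1 ∧ a - 2 * δ ≤ ‖(A - K) f‖ := by
  set u : ℕ → LipSub t := fun n => radialLip t (t.len (φ (v n)))
  obtain ⟨j, hj⟩ := hK.exists_frequently_dist_lt (x := fun n => K (u n))
    (fun n => subset_closure ⟨u n, lipNorm_radial_le t _, rfl⟩) hδ
  have hsmall : ∀ᶠ l in atTop, ‖ψ (v l)‖ * t.len (φ (v j)) < δ := by
    have := (tendsto_norm_of_lt_len t hψ hv).mul_const (t.len (φ (v j)) : ℝ)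
    rw [zero_mul] at this
    exact this.eventually (gt_mem_nhds hδ)
  obtain ⟨l, hKl, hψl⟩ := (hj.and_eventually hsmall).exists
  refine ⟨u l - u j, lipNorm_radial_sub_le t _ _, ?_⟩
  have hval : ‖ψ (v l)‖ * t.len (φ (v l)) - ‖ψ (v l)‖ * t.len (φ (v j)) ≤
      ‖A (u l - u j) (v l)‖ := by
    rw [hA, norm_mul, ← mul_sub]
    refine mul_le_mul_of_nonneg_left ?_ (norm_nonneg _)
    calc (t.len (φ (v l)) : ℝ) - t.len (φ (v j))
        ≤ ‖radial t (t.len (φ (v l))) (φ (v l))‖ - ‖radial t (t.len (φ (v j))) (φ (v l))‖ := by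
          rw [radial_of_len_le t le_rfl, Complex.norm_natCast]
          linarith [norm_radial_le t (t.len (φ (v j))) (φ (v l))]
      _ ≤ _ := norm_sub_norm_le _ _
  have hKsmall : ‖K (u l - u j)‖ < δ := by rw [map_sub, ← dist_eq_norm]; exact hKl
  rw [LinearMap.sub_apply]
  linarith [ha l, norm_coe_le_norm (A (u l - u j)) (v l),
    norm_sub_norm_le (A (u l - u j)) (K (u l - u j))]

lemma iInf_tailSup_le_lipOpNorm_sub (hAC : ∀ f : LipSub t, lipNorm t f ≤ 1 → ‖A f‖ ≤ C)
    {K : LipSub t →ₗ[ℂ] (T →ᵇ ℂ)} (hK : IsCompactLipOp t K) :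
    ⨅ N, tailSup t ψ φ N ≤ lipOpNorm t (A - K) := by
  obtain ⟨R, hR⟩ := isBounded_iff_forall_norm_le.1 hK.isBounded
  have hAK : ∀ f : LipSub t, lipNorm t f ≤ 1 → ‖(A - K) f‖ ≤ C + R := fun f hf =>
    (norm_sub_le _ _).trans (add_le_add (hAC f hf) (hR _ (subset_closure ⟨f, hf, rfl⟩)))
  set s := ⨅ N, tailSup t ψ φ N
  refine le_of_forall_sub_le fun ε hε => ?_
  rcases le_or_gt (s - ε / 3) 0 with hs | hs
  · linarith [lipOpNorm_nonneg t (A - K)]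
  have hlt : ∀ N, s - ε / 3 < tailSup t ψ φ N := fun N =>
    (sub_lt_self s (by positivity)).trans_le
      (ciInf_le ⟨0, by rintro _ ⟨N, rfl⟩; exact tailSup_nonneg t ψ φ N⟩ N)
  choose v hv ha using fun N => exists_lt_mul_len_of_lt_tailSup t hs.le (hlt N)
  obtain ⟨f, hf, hfa⟩ := exists_lipNorm_le_one_and_le_norm_sub t A hA
    (norm_mul_len_le t A hA hAC) hK hv ha (δ := ε / 3) (by positivity)
  linarith [norm_le_lipOpNorm t hAK hf]

end OpNorm

section Truncation

variable {T : Type*} [TopologicalSpace T] [DiscreteTopology T] (t : InfRootedTree T)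

noncomputable def indicatorBCF (s : Set T) : T →ᵇ ℂ :=
  ofNormedAddCommGroupDiscrete (s.indicator 1) 1 fun v => by
    by_cases hv : v ∈ s <;> simp [hv]

lemma indicatorBCF_mul_apply (s : Set T) (g : T →ᵇ ℂ) (v : T) :
    (indicatorBCF s * g) v = if v ∈ s then g v else 0 := by
  by_cases hv : v ∈ s <;> simp [indicatorBCF, hv]

lemma norm_indicatorBCF_mul_le (s : Set T) (g : T →ᵇ ℂ) : ‖indicatorBCF s * g‖ ≤ ‖g‖ :=
  (norm_le (norm_nonneg g)).2 fun v => by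
    rw [indicatorBCF_mul_apply]
    split_ifs
    · exact norm_coe_le_norm g v
    · simp

variable {ψ : T → ℂ} (φ : T → T) {C : ℝ} (A : LipSub t →ₗ[ℂ] (T →ᵇ ℂ))

noncomputable def truncOp (N : ℕ) : LipSub t →ₗ[ℂ] (T →ᵇ ℂ) :=
  LinearMap.mulLeft ℂ (indicatorBCF {v | t.len (φ v) ≤ N}) ∘ₗ A

lemma truncOp_apply (N : ℕ) (f : LipSub t) (v : T) :
    truncOp t φ A N f v = if t.len (φ v) ≤ N then A f v else 0 := by
  simp [truncOp, indicatorBCF_mul_apply]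

variable {A} (hA : ∀ f : LipSub t, ∀ v : T, A f v = ψ v * (f : T → ℂ) (φ v))
include hA

lemma isCompactLipOp_truncOp (hAC : ∀ f : LipSub t, lipNorm t f ≤ 1 → ‖A f‖ ≤ C) (N : ℕ) :
    IsCompactLipOp t (truncOp t φ A N) := by
  set B := (t.finite_setOf_len_le N).toFinset
  set g : T → T →ᵇ ℂ := fun w => indicatorBCF (φ ⁻¹' {w}) * A ⟨1, one_mem_LipSub t⟩
  have hsum : ∀ f : LipSub t, truncOp t φ A N f = ∑ w ∈ B, (f : T → ℂ) w • g w := by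
    intro f
    ext v
    rw [truncOp_apply, hA, BoundedContinuousFunction.coe_sum, Finset.sum_apply]
    simp only [coe_smul, g, indicatorBCF_mul_apply, hA, smul_eq_mul, Set.mem_preimage,
      Set.mem_singleton_iff, Pi.one_apply, mul_one, mul_ite, mul_zero]
    rw [Finset.sum_ite_eq]
    simp [B, mul_comm]
  have : FiniteDimensional ℂ (Submodule.span ℂ (g '' B)) :=
    FiniteDimensional.span_of_finite ℂ (B.finite_toSet.image g)
  refine (Submodule.span ℂ (g '' B)).isCompact_closure_of_subset ?_ ?_
  · rintro _ ⟨f, -, rfl⟩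
    rw [hsum]
    exact Submodule.sum_mem _ fun w hw =>
      Submodule.smul_mem _ _ (Submodule.subset_span ⟨w, hw, rfl⟩)
  · exact isBounded_iff_forall_norm_le.2 ⟨C, by
      rintro _ ⟨f, hf, rfl⟩
      exact (norm_indicatorBCF_mul_le _ _).trans (hAC f hf)⟩

lemma lipOpNorm_sub_truncOp_le (hψ : ∀ v, ‖ψ v‖ * t.len (φ v) ≤ C) (N : ℕ) :
    lipOpNorm t (A - truncOp t φ A N) ≤ tailSup t ψ φ N := by
  refine lipOpNorm_le t (tailSup_nonneg t ψ φ N) fun f hf =>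
    (norm_le (tailSup_nonneg t ψ φ N)).2 fun v => ?_
  rw [LinearMap.sub_apply, coe_sub, Pi.sub_apply, truncOp_apply]
  split_ifs with h
  · simpa using tailSup_nonneg t ψ φ N
  · rw [sub_zero, hA, norm_mul]
    push Not at h
    calc ‖ψ v‖ * ‖(f : T → ℂ) (φ v)‖ ≤ ‖ψ v‖ * (t.len (φ v) * lipNorm t f) :=
          mul_le_mul_of_nonneg_left (norm_le_len_mul_lipNorm t f (by omega)) (norm_nonneg _)
      _ ≤ ‖ψ v‖ * t.len (φ v) :=
          mul_le_mul_of_nonneg_left (mul_le_of_le_one_right (by positivity) hf) (norm_nonneg _)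
      _ ≤ tailSup t ψ φ N := mul_len_le_tailSup t hψ h

end Truncation

/-- if `ψC_φ : 𝓛 → L^∞` is bounded, its essential norm (the distance to the
compact operators, an operator being compact when the image of the unit ball of `𝓛` is
relatively compact and the operator norm being the supremum of the norms over the unit
ball) equals `limsup_{|φ(v)|→∞} |ψ(v)|·|φ(v)|`, i.e. the infimum over `N` of
`sup {|ψ(v)|·|φ(v)| : |φ(v)| > N}` (this being `0` if `φ` has finite range). -/
theorem stmt13 {T : Type*} [TopologicalSpace T] [DiscreteTopology T] (t : InfRootedTree T)
    (ψ : T → ℂ) (φ : T → T)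
    (A : LipSub t →ₗ[ℂ] (T →ᵇ ℂ))
    (hA : ∀ f : LipSub t, ∀ v : T, A f v = ψ v * (f : T → ℂ) (φ v))
    (hb : ∃ C : ℝ, ∀ f : LipSub t, ‖A f‖ ≤ C * lipNorm t (f : T → ℂ)) :
    sInf {x : ℝ | ∃ K : LipSub t →ₗ[ℂ] (T →ᵇ ℂ),
        IsCompact (closure (⇑K '' {f : LipSub t | lipNorm t (f : T → ℂ) ≤ 1})) ∧
        x = sSup {y : ℝ | ∃ f : LipSub t, lipNorm t (f : T → ℂ) ≤ 1 ∧ y = ‖A f - K f‖}} =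
      ⨅ N : ℕ, ⨆ v : {v : T // N < t.len (φ v)}, ‖ψ v.1‖ * t.len (φ v.1) := by
  obtain ⟨C, hC⟩ := hb
  have hAC : ∀ f : LipSub t, lipNorm t f ≤ 1 → ‖A f‖ ≤ max C 0 := fun f hf =>
    calc ‖A f‖ ≤ C * lipNorm t f := hC f
      _ ≤ max C 0 * lipNorm t f := by gcongr; exacts [lipNorm_nonneg t _, le_max_left C 0]
      _ ≤ max C 0 := mul_le_of_le_one_right (le_max_right C 0) hf
  show sInf {x | ∃ K, IsCompactLipOp t K ∧ x = lipOpNorm t (A - K)} = ⨅ N, tailSup t ψ φ N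
  have hbdd : BddBelow {x | ∃ K, IsCompactLipOp t K ∧ x = lipOpNorm t (A - K)} :=
    ⟨0, by rintro _ ⟨K, -, rfl⟩; exact lipOpNorm_nonneg t _⟩
  apply le_antisymm
  · exact le_ciInf fun N =>
      (csInf_le hbdd ⟨_, isCompactLipOp_truncOp t φ hA hAC N, rfl⟩).trans
        (lipOpNorm_sub_truncOp_le t φ hA (norm_mul_len_le t A hA hAC) N)
  · exact le_csInf ⟨_, _, isCompactLipOp_truncOp t φ hA hAC 0, rfl⟩
      fun _ ⟨_, hK, hx⟩ => hx ▸ iInf_tailSup_le_lipOpNorm_sub t A hA hAC hK
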